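/- arXiv:math/0512375 — 2 statements merged into one kernel-verified Lean document; each statement's English description precedes it below -/
import Mathlib

section
/- Let k be a field of characteristic 0 with algebraic closure \bar{k}, and let A be a finitely generated k-algebra that is an integral domain. Then the Galois group Gal(\bar{k}/k) = Aut(\bar{k}/k), acting on B := \bar{k} ⊗_k A through its action on the first tensor factor, acts transitively on the (finite) set of minimal prime ideals of B. -/
/-!
`Gal(k̄/k)` is a profinite group acting continuously on the discrete ring `k̄ ⊗[k] A` (each
element involves finitely many scalars of `k̄`), and the invariants of this action are exactly
`A`: in characteristic `0` the fixed field of `Gal(k̄/k)` is `k`, so an invariant element has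
coefficients in `k` with respect to a `k`-basis of `A`. The profinite group then acts
transitively on the primes of `k̄ ⊗[k] A` over any prime of `A`. Finally every minimal prime
lies over `(0)`: since `k̄` is flat over `k`, a nonzero `a ∈ A` gives a non-zero-divisor
`1 ⊗ a`, which cannot lie in a minimal prime.
-/

open scoped TensorProduct nonZeroDivisors Pointwise

namespace TensorProduct

variable {R G M N : Type*} [CommSemiring R] [Group G] [AddCommMonoid M] [Module R M]
  [DistribMulAction G M] [SMulCommClass R G M] [AddCommMonoid N] [Module R N]
  [TopologicalSpace G] [IsTopologicalGroup G]

theorem isOpen_stabilizer (h : ∀ m : M, IsOpen (MulAction.stabilizer G m : Set G))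
    (x : M ⊗[R] N) : IsOpen (MulAction.stabilizer G x : Set G) := by
  induction x with
  | zero => exact Subgroup.isOpen_mono (fun g _ => smul_zero g) (h 0)
  | tmul m n =>
    refine Subgroup.isOpen_mono (fun g (hg : g • m = m) => ?_) (h m)
    rw [MulAction.mem_stabilizer_iff, smul_tmul', hg]
  | add x y hx hy =>
    refine Subgroup.isOpen_mono (H₁ := MulAction.stabilizer G x ⊓ MulAction.stabilizer G y)
      (fun g hg => ?_) (by rw [Subgroup.coe_inf]; exact hx.inter hy)
    obtain ⟨hgx : g • x = x, hgy : g • y = y⟩ := Subgroup.mem_inf.1 hg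
    rw [MulAction.mem_stabilizer_iff, smul_add, hgx, hgy]

end TensorProduct

namespace Algebra.TensorProduct

section LeftAction

variable {R M A B : Type*} [CommSemiring R] [Monoid M] [Semiring A] [Algebra R A]
  [MulSemiringAction M A] [SMulCommClass R M A]

instance leftMulSemiringAction [Semiring B] [Algebra R B] : MulSemiringAction M (A ⊗[R] B) where
  smul_one m := by rw [one_def, TensorProduct.smul_tmul', smul_one]
  smul_mul m x y := by
    induction x with
    | zero => simp
    | add x x' hx hx' => simp only [add_mul, smul_add, hx, hx']
    | tmul a b =>
      induction y with
      | zero => simp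
      | add y y' hy hy' => simp only [mul_add, smul_add, hy, hy']
      | tmul a' b' => simp only [tmul_mul_tmul, TensorProduct.smul_tmul', smul_mul']

attribute [local instance] rightAlgebra in
instance smulCommClass_rightAlgebra [CommSemiring B] [Algebra R B] :
    SMulCommClass M B (A ⊗[R] B) where
  smul_comm m b x := by
    rw [Algebra.smul_def, Algebra.smul_def, smul_mul']
    congr 1
    show m • ((1 : A) ⊗ₜ[R] b) = 1 ⊗ₜ b
    rw [TensorProduct.smul_tmul', smul_one]

end LeftAction

section AlgEquivAction

variable {R S A : Type*} [CommSemiring R] [Semiring S] [Algebra R S] [Semiring A] [Algebra R A]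

theorem smul_eq_congr_apply (σ : S ≃ₐ[R] S) (x : S ⊗[R] A) :
    σ • x = congr σ AlgEquiv.refl x := by
  induction x with
  | zero => simp
  | add x y hx hy => rw [smul_add, map_add, hx, hy]
  | tmul s a => rfl

theorem map_congr_eq_smul (σ : S ≃ₐ[R] S) (I : Ideal (S ⊗[R] A)) :
    I.map (congr σ AlgEquiv.refl) = σ • I := by
  rw [Ideal.pointwise_smul_def]
  exact congrArg Ideal.span (Set.image_congr fun x _ => (smul_eq_congr_apply σ x).symm)

end AlgEquivAction

section Invariant

variable {k K A G : Type*} [Field k] [Field K] [Algebra k K] [CommRing A] [Algebra k A]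
  [Group G] [MulSemiringAction G K] [SMulCommClass k G K]

theorem baseChange_repr_smul {ι : Type*} (b : Module.Basis ι k A) (g : G) (x : K ⊗[k] A)
    (i : ι) : (b.baseChange K).repr (g • x) i = g • (b.baseChange K).repr x i := by
  induction x with
  | zero => simp
  | add x y hx hy => simp only [smul_add, map_add, Finsupp.add_apply, hx, hy]
  | tmul c a => simp [TensorProduct.smul_tmul', Module.Basis.baseChange_repr_tmul, smul_comm]

attribute [local instance] rightAlgebra in
instance isInvariant [Algebra.IsInvariant k K G] : Algebra.IsInvariant A (K ⊗[k] A) G where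
  isInvariant x hx := by
    let b := Module.Free.chooseBasis k A
    suffices x ∈ (includeRight : A →ₐ[k] K ⊗[k] A).range from this
    rw [← (b.baseChange K).linearCombination_repr x, Finsupp.linearCombination_apply]
    refine Subalgebra.sum_mem _ fun i _ => ?_
    obtain ⟨d, hd⟩ := Algebra.IsInvariant.isInvariant (A := k) (G := G)
      ((b.baseChange K).repr x i) fun g => by rw [← baseChange_repr_smul, hx]
    exact ⟨d • b i, by simp [← hd, Module.Basis.baseChange_apply, algebraMap_smul]⟩

end Invariant

section Flat

variable {R S A : Type*} [CommRing R] [CommRing S] [Algebra R S] [Module.Flat R S]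
  [CommRing A] [Algebra R A]

theorem one_tmul_mem_nonZeroDivisors {a : A} (ha : a ∈ A⁰) : (1 : S) ⊗ₜ[R] a ∈ (S ⊗[R] A)⁰ := by
  have hmul (x : S ⊗[R] A) : (LinearMap.mulRight R a).lTensor S x = x * (1 ⊗ₜ a) := by
    induction x with
    | zero => simp
    | add x y hx hy => rw [map_add, add_mul, hx, hy]
    | tmul s b => simp
  have hinj : Function.Injective ((LinearMap.mulRight R a).lTensor S) :=
    Module.Flat.lTensor_preserves_injective_linearMap _
      fun x y h => (mul_cancel_right_mem_nonZeroDivisors ha).1 h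
  refine mem_nonZeroDivisors_iff_right.2 fun x hx => hinj ?_
  rw [hmul, hx, map_zero]

attribute [local instance] rightAlgebra in
theorem under_eq_bot_of_mem_minimalPrimes [IsDomain A] {q : Ideal (S ⊗[R] A)}
    (hq : q ∈ minimalPrimes (S ⊗[R] A)) : q.under A = ⊥ := by
  refine eq_bot_iff.2 fun a (ha : 1 ⊗ₜ a ∈ q) => ?_
  by_contra h0
  exact Set.disjoint_left.1 (Ideal.disjoint_nonZeroDivisors_of_mem_minimalPrimes hq) ha
    (one_tmul_mem_nonZeroDivisors (mem_nonZeroDivisors_of_ne_zero h0))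

end Flat

end Algebra.TensorProduct

theorem galois_transitive_on_minimal_primes_general
    (k : Type) [Field k] [CharZero k]
    (A : Type) [CommRing A] [IsDomain A] [Algebra k A]
    (p q : Ideal (TensorProduct k (AlgebraicClosure k) A))
    (hp : p ∈ minimalPrimes (TensorProduct k (AlgebraicClosure k) A))
    (hq : q ∈ minimalPrimes (TensorProduct k (AlgebraicClosure k) A)) :
    ∃ σ : AlgebraicClosure k ≃ₐ[k] AlgebraicClosure k,
      Ideal.map (Algebra.TensorProduct.congr σ (AlgEquiv.refl : A ≃ₐ[k] A)) p = q := by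
  let _ : TopologicalSpace (AlgebraicClosure k ⊗[k] A) := ⊥
  have _ : DiscreteTopology (AlgebraicClosure k ⊗[k] A) := ⟨rfl⟩
  have _ : ContinuousSMul Gal(AlgebraicClosure k/k) (AlgebraicClosure k ⊗[k] A) :=
    continuousSMul_iff_stabilizer_isOpen.2 <|
      TensorProduct.isOpen_stabilizer stabilizer_isOpen_of_isIntegral
  have _ := hp.1.1
  have _ := hq.1.1
  let _ := Algebra.TensorProduct.rightAlgebra (R := k) (A := AlgebraicClosure k) (B := A)
  have hpq : p.under A = q.under A := by
    rw [Algebra.TensorProduct.under_eq_bot_of_mem_minimalPrimes hp,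
      Algebra.TensorProduct.under_eq_bot_of_mem_minimalPrimes hq]
  obtain ⟨σ, hσ⟩ := Algebra.IsInvariant.exists_smul_of_under_eq_of_profinite
    (G := Gal(AlgebraicClosure k/k)) p q hpq
  exact ⟨σ, by rw [Algebra.TensorProduct.map_congr_eq_smul, hσ]⟩

/-- Let `k` be a field of characteristic 0 with algebraic closure `k̄ = AlgebraicClosure k`,
and let `A` be a finitely generated `k`-algebra which is an integral domain. Then the
Galois group `Gal(k̄/k) = Aut(k̄/k)`, acting on `B = k̄ ⊗[k] A` through the first tensor
factor, acts transitively on the set of minimal prime ideals of `B`. -/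
theorem galois_transitive_on_minimal_primes
    (k : Type) [Field k] [CharZero k]
    (A : Type) [CommRing A] [IsDomain A] [Algebra k A]
    (hfg : Algebra.FiniteType k A)
    (p q : Ideal (TensorProduct k (AlgebraicClosure k) A))
    (hp : p ∈ minimalPrimes (TensorProduct k (AlgebraicClosure k) A))
    (hq : q ∈ minimalPrimes (TensorProduct k (AlgebraicClosure k) A)) :
    ∃ σ : AlgebraicClosure k ≃ₐ[k] AlgebraicClosure k,
      Ideal.map (Algebra.TensorProduct.congr σ (AlgEquiv.refl : A ≃ₐ[k] A)) p = q :=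
  galois_transitive_on_minimal_primes_general k A p q hp hq
end

section
/- Let k be a field of characteristic 0 with algebraic closure \bar{k}, and let A be a finitely generated k-algebra that is an integral domain. Set B := \bar{k} ⊗_k A and assume that the minimal prime ideals of B are pairwise comaximal (i.e., the irreducible components of the base change of Spec A to \bar{k} are pairwise disjoint; this holds, for example, when B is normal). If there exists a prime ideal p of A, p ≠ A, such that the radical of the extension of p to B is a prime ideal (i.e., Spec A contains a geometrically irreducible k-subvariety), then B has a unique minimal prime ideal; that is, Spec A is geometrically irreducible over k. -/
/-!
Since `k̄ ⊗[k] A` is flat and integral over the domain `A`, going down forces every minimal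
prime `Q` of `k̄ ⊗[k] A` to contract to `0`, and lying over then puts `Q` inside a prime `m`
contracting to `p`. Such an `m` contains `√(p (k̄ ⊗[k] A))`, hence also the minimal prime
`P₀` below this prime radical; so `Q` and `P₀` are not comaximal, i.e. `Q = P₀`.
-/

open TensorProduct

namespace Ideal

theorem existsUnique_mem_minimalPrimes_of_pairwise_sup_eq_top {S : Type*} [CommRing S]
    (hcomax : ∀ P ∈ minimalPrimes S, ∀ Q ∈ minimalPrimes S, P ≠ Q → P ⊔ Q = ⊤)
    (q : Ideal S) [q.IsPrime] (hq : ∀ Q ∈ minimalPrimes S, Q ⊔ q ≠ ⊤) :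
    ∃! P : Ideal S, P ∈ minimalPrimes S := by
  obtain ⟨P₀, hP₀, hP₀q⟩ := exists_minimalPrimes_le (I := ⊥) (J := q) bot_le
  refine ⟨P₀, hP₀, fun Q hQ => by_contra fun hne => hq Q hQ ?_⟩
  exact top_le_iff.mp (hcomax Q hQ P₀ hP₀ hne ▸ sup_le_sup_left hP₀q Q)

variable {R S : Type*} [CommRing R] [CommRing S] [Algebra R S]

theorem comap_mem_minimalPrimes_of_hasGoingDown [Algebra.HasGoingDown R S] {Q : Ideal S}
    (hQ : Q ∈ minimalPrimes S) : Q.comap (algebraMap R S) ∈ minimalPrimes R := by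
  have : Q.IsPrime := hQ.1.1
  refine ⟨⟨inferInstance, bot_le⟩, fun p ⟨hp, _⟩ hle => ?_⟩
  obtain ⟨P, hPQ, hP, hPp⟩ := Q.exists_ideal_le_liesOver_of_le (q := Q.under R) (p := p) hle
  have hQP : Q ≤ P := hQ.2 ⟨hP, bot_le⟩ hPQ
  rw [P.over_def p]
  exact comap_mono hQP

theorem exists_isPrime_sup_map_le_of_mem_minimalPrimes [IsDomain R] [Algebra.HasGoingDown R S]
    [Algebra.IsIntegral R S] (p : Ideal R) [p.IsPrime] {Q : Ideal S}
    (hQ : Q ∈ minimalPrimes S) : ∃ m : Ideal S, m.IsPrime ∧ Q ⊔ p.map (algebraMap R S) ≤ m := by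
  have : Q.IsPrime := hQ.1.1
  have hQ_bot : Q.comap (algebraMap R S) = ⊥ := by
    simpa [IsDomain.minimalPrimes_eq_singleton_bot] using
      comap_mem_minimalPrimes_of_hasGoingDown (R := R) hQ
  obtain ⟨m, hQm, hm, hmp⟩ := exists_ideal_over_prime_of_isIntegral p Q (hQ_bot ▸ bot_le)
  exact ⟨m, hm, sup_le hQm (map_le_iff_le_comap.mpr hmp.ge)⟩

end Ideal

namespace Algebra.TensorProduct

attribute [local instance] rightAlgebra

variable (k K A : Type*) [CommRing k] [CommRing K] [Algebra k K] [CommRing A] [Algebra k A]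

theorem flat_rightAlgebra [Module.Flat k K] : Module.Flat A (K ⊗[k] A) :=
  Module.Flat.isBaseChange k A K _ (TensorProduct.isPushout' (R := k)).out

theorem isIntegral_rightAlgebra [Algebra.IsIntegral k K] : Algebra.IsIntegral A (K ⊗[k] A) :=
  Algebra.IsPushout.isIntegral' k A K _

end Algebra.TensorProduct

attribute [local instance] Algebra.TensorProduct.rightAlgebra in
theorem geometrically_irreducible_of_subvariety_of_comaximal_components_general
    (k : Type) [Field k]
    (A : Type) [CommRing A] [IsDomain A] [Algebra k A]
    (hcomax : ∀ P ∈ minimalPrimes (TensorProduct k (AlgebraicClosure k) A),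
      ∀ Q ∈ minimalPrimes (TensorProduct k (AlgebraicClosure k) A), P ≠ Q → P ⊔ Q = ⊤)
    (p : Ideal A) (hp : p.IsPrime)
    (hgeom : (Ideal.map
        (Algebra.TensorProduct.includeRight : A →ₐ[k] TensorProduct k (AlgebraicClosure k) A)
        p).radical.IsPrime) :
    ∃! P : Ideal (TensorProduct k (AlgebraicClosure k) A),
      P ∈ minimalPrimes (TensorProduct k (AlgebraicClosure k) A) := by
  have := Algebra.TensorProduct.flat_rightAlgebra k (AlgebraicClosure k) A
  have := Algebra.TensorProduct.isIntegral_rightAlgebra k (AlgebraicClosure k) A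
  set q := (p.map (algebraMap A (AlgebraicClosure k ⊗[k] A))).radical
  have : q.IsPrime := hgeom
  refine Ideal.existsUnique_mem_minimalPrimes_of_pairwise_sup_eq_top hcomax q fun Q hQ => ?_
  obtain ⟨m, hm, hQm⟩ := Ideal.exists_isPrime_sup_map_le_of_mem_minimalPrimes p hQ
  have hqm : q ≤ m := hm.radical_le_iff.mpr (le_sup_right.trans hQm)
  exact ne_top_of_le_ne_top hm.ne_top (sup_le (le_sup_left.trans hQm) hqm)

/-- Let `k` be a field of characteristic 0, `A` a finitely generated `k`-algebra which is
a domain, and `B = AlgebraicClosure k ⊗[k] A`. Assume the minimal primes of `B` are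
pairwise comaximal (the irreducible components of the base change of `Spec A` are
pairwise disjoint). If `Spec A` contains a geometrically irreducible `k`-subvariety,
i.e. there is a prime ideal `p ⊊ A` whose extension to `B` has prime radical, then `B`
has a unique minimal prime: `Spec A` is geometrically irreducible over `k`. -/
theorem geometrically_irreducible_of_subvariety_of_comaximal_components
    (k : Type) [Field k] [CharZero k]
    (A : Type) [CommRing A] [IsDomain A] [Algebra k A]
    (hfg : Algebra.FiniteType k A)
    (hcomax : ∀ P ∈ minimalPrimes (TensorProduct k (AlgebraicClosure k) A),
      ∀ Q ∈ minimalPrimes (TensorProduct k (AlgebraicClosure k) A), P ≠ Q → P ⊔ Q = ⊤)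
    (p : Ideal A) (hp : p.IsPrime) (hpA : p ≠ ⊤)
    (hgeom : (Ideal.map
        (Algebra.TensorProduct.includeRight : A →ₐ[k] TensorProduct k (AlgebraicClosure k) A)
        p).radical.IsPrime) :
    ∃! P : Ideal (TensorProduct k (AlgebraicClosure k) A),
      P ∈ minimalPrimes (TensorProduct k (AlgebraicClosure k) A) :=
  geometrically_irreducible_of_subvariety_of_comaximal_components_general k A hcomax p hp hgeom
end
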